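/- arXiv:1604.05665 — 5 statements merged into one kernel-verified Lean document; each statement's English description precedes it below -/
import Mathlib

section
/- Let s ∈ (0,1) and let u : ℝⁿ → ℝ be bounded and twice continuously differentiable with bounded first and second derivatives. Fix x ∈ ℝⁿ and assume that the function h ↦ (2|u(x)| − |u(x+h)| − |u(x−h)|)|h|^{−n−2s} is integrable on ℝⁿ. Then the Kato inequality holds at x: (C_{n,s}/2) ∫_{ℝⁿ} (2|u(x)| − |u(x+h)| − |u(x−h)|) |h|^{−n−2s} dh ≤ sgn(u(x)) · (-Δ)^s u(x), where sgn(t) equals 1 for t > 0, −1 for t < 0, and 0 for t = 0. -/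
open MeasureTheory Metric Module Filter Topology

/-!
Pointwise, `sign (u x) * u y ≤ |u y|` with equality at `y = x`, so the symmetric second
difference of `|u|` at `x` is dominated by `sign (u x)` times that of `u`, and the inequality
follows by integrating against `‖h‖ ^ (-n - 2s)`. The work is in the integrability of the
right-hand integrand. Its excess over the left-hand one is nonnegative, vanishes for small `h`
because `u` keeps the sign of `u x` near `x`, and for `‖h‖ ≥ δ` is bounded by
`2 (|u (x + h)| + |u (x - h)|) ‖h‖ ^ (-n - 2s)`, which is integrable there by the hypothesis on
the left-hand integrand together with the integrability of `‖h‖ ^ (-n - 2s)` away from the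
origin.
-/

def symmSecondDiff {E : Type*} [AddGroup E] (v : E → ℝ) (x h : E) : ℝ :=
  2 * v x - v (x + h) - v (x - h)

namespace Real

theorem sign_mul_self_eq_abs (r : ℝ) : sign r * r = |r| := by
  rcases lt_trichotomy r 0 with hr | rfl | hr
  · rw [sign_of_neg hr, abs_of_neg hr]; ring
  · simp
  · rw [sign_of_pos hr, abs_of_pos hr, one_mul]

theorem sign_mul_le_abs (a t : ℝ) : sign a * t ≤ |t| := by
  rcases sign_apply_eq a with h | h | h <;> rw [h]
  · linarith [neg_le_abs t]
  · simp
  · simpa using le_abs_self t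

end Real

theorem ContinuousAt.eventually_sign_mul_eq_abs {X : Type*} [TopologicalSpace X] {u : X → ℝ}
    {x : X} (hu : ContinuousAt u x) (hx : u x ≠ 0) :
    ∀ᶠ y in 𝓝 x, Real.sign (u x) * u y = |u y| := by
  rcases hx.lt_or_gt with hneg | hpos
  · filter_upwards [hu.eventually (gt_mem_nhds hneg)] with y hy
    rw [Real.sign_of_neg hneg, abs_of_neg hy]; ring
  · filter_upwards [hu.eventually (lt_mem_nhds hpos)] with y hy
    rw [Real.sign_of_pos hpos, abs_of_pos hy, one_mul]

theorem symmSecondDiff_abs_le_sign_mul {E : Type*} [AddGroup E] (u : E → ℝ) (x h : E) :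
    symmSecondDiff (fun y => |u y|) x h ≤ Real.sign (u x) * symmSecondDiff u x h := by
  have hx := Real.sign_mul_self_eq_abs (u x)
  have hplus := Real.sign_mul_le_abs (u x) (u (x + h))
  have hminus := Real.sign_mul_le_abs (u x) (u (x - h))
  simp only [symmSecondDiff]
  linarith

section AddHaar

variable {E : Type*} [NormedAddCommGroup E] [NormedSpace ℝ E] [FiniteDimensional ℝ E]
  [MeasurableSpace E] [BorelSpace E] (μ : Measure E) [μ.IsAddHaarMeasure] {p : ℝ}

theorem integrableOn_compl_ball_rpow_neg_norm (hp : (finrank ℝ E : ℝ) < p) {δ : ℝ}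
    (hδ : 0 < δ) : IntegrableOn (fun h : E => ‖h‖ ^ (-p)) (ball 0 δ)ᶜ μ := by
  refine ((integrable_one_add_norm hp).const_mul ((1 + δ⁻¹) ^ p)).integrableOn.mono'
    (measurable_norm.pow_const _).aestronglyMeasurable
    ((ae_restrict_iff' measurableSet_ball.compl).2 (.of_forall fun h hh => ?_))
  have hδh : δ ≤ ‖h‖ := by simpa using hh
  have hh0 : 0 < ‖h‖ := hδ.trans_le hδh
  have hp0 : 0 ≤ p := (Nat.cast_nonneg _).trans hp.le
  have hratio : ‖h‖⁻¹ ≤ (1 + δ⁻¹) * (1 + ‖h‖)⁻¹ := by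
    have : 1 ≤ δ⁻¹ * ‖h‖ := by rwa [inv_mul_eq_div, one_le_div hδ]
    rw [← div_eq_mul_inv, inv_eq_one_div, div_le_div_iff₀ hh0 (by positivity)]
    linarith
  calc ‖‖h‖ ^ (-p)‖ = (‖h‖⁻¹) ^ p := by
        rw [Real.norm_of_nonneg (by positivity), Real.rpow_neg hh0.le, Real.inv_rpow hh0.le]
    _ ≤ ((1 + δ⁻¹) * (1 + ‖h‖)⁻¹) ^ p := by gcongr
    _ = (1 + δ⁻¹) ^ p * (1 + ‖h‖) ^ (-p) := by
        rw [Real.mul_rpow (by positivity) (by positivity), Real.inv_rpow (by positivity),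
          Real.rpow_neg (by positivity)]

theorem integrableOn_compl_ball_add_div_rpow {v : E → ℝ} {x : E}
    (hp : (finrank ℝ E : ℝ) < p) {δ : ℝ} (hδ : 0 < δ)
    (hint : Integrable (fun h => symmSecondDiff v x h / ‖h‖ ^ p) μ) :
    IntegrableOn (fun h => (v (x + h) + v (x - h)) / ‖h‖ ^ p) (ball 0 δ)ᶜ μ := by
  refine IntegrableOn.congr_fun (((integrableOn_compl_ball_rpow_neg_norm μ hp hδ).const_mul
    (2 * v x)).sub hint.integrableOn) (fun h _ => ?_) measurableSet_ball.compl
  simp only [Pi.sub_apply, symmSecondDiff, Real.rpow_neg (norm_nonneg h)]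
  ring

theorem integrable_sign_mul_symmSecondDiff_div_rpow {u : E → ℝ} (hu : Continuous u) {x : E}
    (hp : (finrank ℝ E : ℝ) < p)
    (hint : Integrable (fun h => symmSecondDiff (fun y => |u y|) x h / ‖h‖ ^ p) μ) :
    Integrable (fun h => Real.sign (u x) * (symmSecondDiff u x h / ‖h‖ ^ p)) μ := by
  rcases eq_or_ne (u x) 0 with hx | hx
  · simp [hx]
  set σ := Real.sign (u x)
  obtain ⟨δ, hδ, hsign⟩ :=
    Metric.eventually_nhds_iff.1 (hu.continuousAt.eventually_sign_mul_eq_abs hx)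
  set D : E → ℝ := fun h =>
    (|u (x + h)| - σ * u (x + h) + (|u (x - h)| - σ * u (x - h))) / ‖h‖ ^ p
  have hD : Integrable D μ := by
    refine (IntegrableOn.integrable_indicator
      ((integrableOn_compl_ball_add_div_rpow μ hp hδ hint).const_mul 2)
      measurableSet_ball.compl).mono'
      (Measurable.aestronglyMeasurable (by simp only [D]; fun_prop)) (.of_forall fun h => ?_)
    have hplus := Real.sign_mul_le_abs (u x) (u (x + h))
    have hminus := Real.sign_mul_le_abs (u x) (u (x - h))
    simp only [D]
    rw [Real.norm_of_nonneg (div_nonneg (by linarith) (by positivity))]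
    by_cases hh : h ∈ ball 0 δ
    · have hdist : ‖h‖ < δ := mem_ball_zero_iff.1 hh
      rw [Set.indicator_of_notMem (Set.notMem_compl_iff.2 hh),
        hsign (y := x + h) (by simpa [dist_eq_norm] using hdist),
        hsign (y := x - h) (by simpa [dist_eq_norm] using hdist)]
      simp
    · rw [Set.indicator_of_mem hh, ← mul_div_assoc]
      have hplus' := Real.sign_mul_le_abs (u x) (-u (x + h))
      have hminus' := Real.sign_mul_le_abs (u x) (-u (x - h))
      rw [abs_neg] at hplus' hminus'
      gcongr
      linarith
  refine (hint.add hD).congr (.of_forall fun h => ?_)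
  have hσ : σ * u x = |u x| := Real.sign_mul_self_eq_abs (u x)
  simp only [Pi.add_apply, D, symmSecondDiff, ← hσ]
  ring

end AddHaar

theorem kato_inequality_fractional_laplacian_general {n : ℕ} (s : ℝ) (hs : s ∈ Set.Ioo (0 : ℝ) 1)
    (C : ℝ) (hC : 0 < C)
    (u : EuclideanSpace ℝ (Fin n) → ℝ) (hu : ContDiff ℝ 2 u)
    (x : EuclideanSpace ℝ (Fin n))
    (hint : Integrable
      (fun h => (2 * |u x| - |u (x + h)| - |u (x - h)|) / ‖h‖ ^ ((n : ℝ) + 2 * s))) :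
    C / 2 * ∫ h, (2 * |u x| - |u (x + h)| - |u (x - h)|) / ‖h‖ ^ ((n : ℝ) + 2 * s)
      ≤ Real.sign (u x) *
        (C / 2 * ∫ h, (2 * u x - u (x + h) - u (x - h)) / ‖h‖ ^ ((n : ℝ) + 2 * s)) := by
  have hp : (finrank ℝ (EuclideanSpace ℝ (Fin n)) : ℝ) < n + 2 * s := by
    rw [finrank_euclideanSpace_fin]; linarith [hs.1]
  have hrhs := integrable_sign_mul_symmSecondDiff_div_rpow volume hu.continuous hp hint
  rw [mul_left_comm (Real.sign (u x)), ← integral_const_mul (Real.sign (u x))]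
  refine mul_le_mul_of_nonneg_left (integral_mono hint hrhs fun h => ?_) (half_pos hC).le
  rw [← mul_div_assoc]
  exact div_le_div_of_nonneg_right (symmSecondDiff_abs_le_sign_mul u x h) (by positivity)

/-- **Kato inequality** at a point for the fractional Laplacian on `ℝⁿ`, written in its
symmetrized second-difference form, where `Real.sign t` is `1` for `t > 0`, `-1` for `t < 0`
and `0` for `t = 0`. -/
theorem kato_inequality_fractional_laplacian {n : ℕ} (s : ℝ) (hs : s ∈ Set.Ioo (0 : ℝ) 1)
    (C : ℝ) (hC : 0 < C)
    (u : EuclideanSpace ℝ (Fin n) → ℝ) (hu : ContDiff ℝ 2 u)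
    (hub : ∃ M, ∀ x, |u x| ≤ M)
    (hu1 : ∃ M, ∀ x, ‖fderiv ℝ u x‖ ≤ M)
    (hu2 : ∃ M, ∀ x, ‖iteratedFDeriv ℝ 2 u x‖ ≤ M)
    (x : EuclideanSpace ℝ (Fin n))
    (hint : Integrable
      (fun h => (2 * |u x| - |u (x + h)| - |u (x - h)|) / ‖h‖ ^ ((n : ℝ) + 2 * s))) :
    C / 2 * ∫ h, (2 * |u x| - |u (x + h)| - |u (x - h)|) / ‖h‖ ^ ((n : ℝ) + 2 * s)
      ≤ Real.sign (u x) *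
        (C / 2 * ∫ h, (2 * u x - u (x + h) - u (x - h)) / ‖h‖ ^ ((n : ℝ) + 2 * s)) :=
  kato_inequality_fractional_laplacian_general s hs C hC u hu x hint
end

section
/- Let K : ℝⁿ → [0,∞) be measurable, u : ℝⁿ → ℝ measurable, and φ : ℝ → ℝ convex and differentiable at u(x). Define the non-divergence form nonlocal operator ℐv(x) = ∫_{ℝⁿ} (2v(x) − v(x+y) − v(x−y)) K(y) dy. Fix x ∈ ℝⁿ and assume that the integrals defining ℐu(x) and ℐ(φ∘u)(x) converge absolutely. Then ℐ(φ∘u)(x) ≤ φ'(u(x)) · ℐu(x). -/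
/-! The integrand inequality holds pointwise: the tangent line of `φ` at `u x` lies below `φ`,
so evaluating it at `u (x + y)` and `u (x - y)` bounds the second difference of `φ ∘ u` by
`φ' (u x)` times that of `u`; multiplying by `K y ≥ 0` and integrating gives the claim. -/

open MeasureTheory

lemma ConvexOn.add_deriv_mul_sub_le {S : Set ℝ} {φ : ℝ → ℝ} (hconv : ConvexOn ℝ S φ)
    {a b : ℝ} (ha : a ∈ S) (hb : b ∈ S) (hd : DifferentiableAt ℝ φ a) :
    φ a + deriv φ a * (b - a) ≤ φ b := by
  rcases lt_trichotomy a b with hab | rfl | hba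
  · have hslope := hconv.deriv_le_slope ha hb hab hd
    rw [slope_def_field, le_div_iff₀ (sub_pos.mpr hab)] at hslope
    linarith
  · simp
  · have hslope := hconv.slope_le_deriv hb ha hba hd
    rw [slope_def_field, div_le_iff₀ (sub_pos.mpr hba)] at hslope
    nlinarith

lemma ConvexOn.two_mul_sub_sub_le {S : Set ℝ} {φ : ℝ → ℝ} (hconv : ConvexOn ℝ S φ)
    {a b c : ℝ} (ha : a ∈ S) (hb : b ∈ S) (hc : c ∈ S) (hd : DifferentiableAt ℝ φ a) :
    2 * φ a - φ b - φ c ≤ deriv φ a * (2 * a - b - c) := by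
  have hab := hconv.add_deriv_mul_sub_le ha hb hd
  have hac := hconv.add_deriv_mul_sub_le ha hc hd
  linarith

theorem cordoba_cordoba_nondivergence_general {n : ℕ}
    (K : EuclideanSpace ℝ (Fin n) → ℝ) (hK0 : ∀ y, 0 ≤ K y)
    (u : EuclideanSpace ℝ (Fin n) → ℝ)
    (x : EuclideanSpace ℝ (Fin n))
    (φ : ℝ → ℝ) (hconv : ConvexOn ℝ Set.univ φ) (hd : DifferentiableAt ℝ φ (u x))
    (h1 : Integrable (fun y => (2 * u x - u (x + y) - u (x - y)) * K y))
    (h2 : Integrable (fun y => (2 * φ (u x) - φ (u (x + y)) - φ (u (x - y))) * K y)) :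
    ∫ y, (2 * φ (u x) - φ (u (x + y)) - φ (u (x - y))) * K y
      ≤ deriv φ (u x) * ∫ y, (2 * u x - u (x + y) - u (x - y)) * K y := by
  rw [← integral_const_mul]
  refine integral_mono h2 (h1.const_mul _) fun y => ?_
  calc (2 * φ (u x) - φ (u (x + y)) - φ (u (x - y))) * K y
      ≤ deriv φ (u x) * (2 * u x - u (x + y) - u (x - y)) * K y :=
        mul_le_mul_of_nonneg_right
          (hconv.two_mul_sub_sub_le trivial trivial trivial hd) (hK0 y)
    _ = deriv φ (u x) * ((2 * u x - u (x + y) - u (x - y)) * K y) := mul_assoc ..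

/-- **Córdoba–Córdoba inequality** for nonlocal operators in non-divergence form
`ℐv(x) = ∫ (2v(x) - v(x+y) - v(x-y)) K(y) dy` with a nonnegative kernel `K`. -/
theorem cordoba_cordoba_nondivergence {n : ℕ}
    (K : EuclideanSpace ℝ (Fin n) → ℝ) (hKmeas : Measurable K) (hK0 : ∀ y, 0 ≤ K y)
    (u : EuclideanSpace ℝ (Fin n) → ℝ) (humeas : Measurable u)
    (x : EuclideanSpace ℝ (Fin n))
    (φ : ℝ → ℝ) (hconv : ConvexOn ℝ Set.univ φ) (hd : DifferentiableAt ℝ φ (u x))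
    (h1 : Integrable (fun y => (2 * u x - u (x + y) - u (x - y)) * K y))
    (h2 : Integrable (fun y => (2 * φ (u x) - φ (u (x + y)) - φ (u (x - y))) * K y)) :
    ∫ y, (2 * φ (u x) - φ (u (x + y)) - φ (u (x - y))) * K y
      ≤ deriv φ (u x) * ∫ y, (2 * u x - u (x + y) - u (x - y)) * K y :=
  cordoba_cordoba_nondivergence_general K hK0 u x φ hconv hd h1 h2
end

section
/- Let (X, μ) be a measure space, let K : X × X → [0,∞) be measurable, let u : X → ℝ be measurable, and let φ : ℝ → ℝ be convex and differentiable at u(x). Define ℒv(x) = ∫_X (v(x) − v(y)) K(x,y) dμ(y). Fix x ∈ X and assume that the integrals defining ℒu(x) and ℒ(φ∘u)(x) converge absolutely. Then the Córdoba–Córdoba inequality holds at x: ℒ(φ∘u)(x) ≤ φ'(u(x)) · ℒu(x). -/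
open MeasureTheory

lemma ConvexOn.sub_le_deriv_mul_sub {S : Set ℝ} {f : ℝ → ℝ} (hf : ConvexOn ℝ S f) {a b : ℝ}
    (ha : a ∈ S) (hb : b ∈ S) (hd : DifferentiableAt ℝ f a) :
    f a - f b ≤ deriv f a * (a - b) := by
  rcases lt_trichotomy a b with hab | rfl | hba
  · have hslope := hf.deriv_le_slope ha hb hab hd
    rw [slope_def_field, le_div_iff₀ (sub_pos.mpr hab)] at hslope
    linarith
  · simp
  · have hslope := hf.slope_le_deriv hb ha hba hd
    rw [slope_def_field, div_le_iff₀ (sub_pos.mpr hba)] at hslope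
    linarith

theorem cordoba_cordoba_integral_operator_general {X : Type*} [MeasurableSpace X]
    (μ : Measure X) (K : X × X → ℝ) (hK0 : ∀ p, 0 ≤ K p)
    (u : X → ℝ) (x : X)
    (φ : ℝ → ℝ) (hconv : ConvexOn ℝ Set.univ φ) (hd : DifferentiableAt ℝ φ (u x))
    (h1 : Integrable (fun y => (u x - u y) * K (x, y)) μ)
    (h2 : Integrable (fun y => (φ (u x) - φ (u y)) * K (x, y)) μ) :
    ∫ y, (φ (u x) - φ (u y)) * K (x, y) ∂μ
      ≤ deriv φ (u x) * ∫ y, (u x - u y) * K (x, y) ∂μ := by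
  rw [← integral_const_mul]
  refine integral_mono h2 (h1.const_mul _) fun y => ?_
  rw [← mul_assoc]
  exact mul_le_mul_of_nonneg_right
    (hconv.sub_le_deriv_mul_sub (Set.mem_univ _) (Set.mem_univ _) hd) (hK0 (x, y))

/-- **Córdoba–Córdoba inequality** for integral operators
`ℒv(x) = ∫ (v(x) - v(y)) K(x,y) dμ(y)` with nonnegative kernel `K` on a measure space. -/
theorem cordoba_cordoba_integral_operator {X : Type*} [MeasurableSpace X]
    (μ : Measure X) (K : X × X → ℝ) (hKmeas : Measurable K) (hK0 : ∀ p, 0 ≤ K p)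
    (u : X → ℝ) (humeas : Measurable u) (x : X)
    (φ : ℝ → ℝ) (hconv : ConvexOn ℝ Set.univ φ) (hd : DifferentiableAt ℝ φ (u x))
    (h1 : Integrable (fun y => (u x - u y) * K (x, y)) μ)
    (h2 : Integrable (fun y => (φ (u x) - φ (u y)) * K (x, y)) μ) :
    ∫ y, (φ (u x) - φ (u y)) * K (x, y) ∂μ
      ≤ deriv φ (u x) * ∫ y, (u x - u y) * K (x, y) ∂μ :=
  cordoba_cordoba_integral_operator_general μ K hK0 u x φ hconv hd h1 h2
end

section
/- Let a ∈ (−1,1), R > 0, and let 𝒞 = B_R × (0,1) ⊂ ℝⁿ × ℝ, where B_R is the open ball of radius R centered at 0 in ℝⁿ. Let u be continuous on the closure of 𝒞, twice continuously differentiable in 𝒞, and satisfy: (i) Δu + (a/y) ∂_y u ≤ 0 in 𝒞 (i.e. u is a supersolution of the equation div(y^a ∇u) = 0), (ii) u > 0 in 𝒞, and (iii) u(0,0) = 0. Then limsup_{y → 0⁺} ( −y^{a−1} u(0,y) ) < 0; equivalently, liminf_{y → 0⁺} y^{a−1} u(0,y) > 0, so there exist c > 0 and y₀ ∈ (0,1)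 with u(0,y) ≥ c·y^{1−a} for all y ∈ (0,y₀). -/
/-!
Comparison with an explicit barrier. On a thin cylinder `B_r × (0, y₀)` take
`w = (r² - c y₀² - |x|²) y^{1-a} + c y^{3-a}` with `c = n + 1`. The profile `y^{1-a}` is
annihilated by `Δ + (a/y) ∂_y`, so `Δw + (a/y) ∂_y w = 2 (c (3 - a) - n) y^{1-a} > 0`, while
`w ≤ 0` on the bottom and on the lateral boundary. Scale `w` by `ε > 0` so that `ε w ≤ u` on the
top, where `u` has a positive minimum. Then `u - ε w` is a strict supersolution that is
nonnegative on the boundary; at a negative interior minimum its gradient would vanish and its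
pure second derivatives would be nonnegative, which is impossible. Hence
`u (0, y) ≥ ε w (0, y) ≥ ε (r² - c y₀²) y^{1-a}`.
-/

noncomputable def halfSpaceLaplacian {n : ℕ} (w : EuclideanSpace ℝ (Fin n) × ℝ → ℝ)
    (p : EuclideanSpace ℝ (Fin n) × ℝ) : ℝ :=
  (∑ i : Fin n, iteratedFDeriv ℝ 2 w p
      ![(EuclideanSpace.single i (1 : ℝ), (0 : ℝ)), (EuclideanSpace.single i (1 : ℝ), (0 : ℝ))])
  + iteratedFDeriv ℝ 2 w p
      ![((0 : EuclideanSpace ℝ (Fin n)), (1 : ℝ)), ((0 : EuclideanSpace ℝ (Fin n)), (1 : ℝ))]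

open Metric Set Filter Topology

section LineRestriction

variable {E : Type*} [NormedAddCommGroup E] [NormedSpace ℝ E] {v : E → ℝ} {p : E}

theorem IsLocalMin.deriv_deriv_nonneg {φ : ℝ → ℝ} {t : ℝ} (hmin : IsLocalMin φ t)
    (hc : ContinuousAt φ t) : 0 ≤ deriv (deriv φ) t := by
  by_contra! hneg
  have hmax := isLocalMax_of_deriv_deriv_neg hneg hmin.deriv_eq_zero hc
  have hconst : φ =ᶠ[𝓝 t] fun _ => φ t := by
    filter_upwards [hmin, hmax] with s hs₁ hs₂ using le_antisymm hs₂ hs₁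
  rw [hconst.deriv.deriv_eq] at hneg
  simp at hneg

theorem hasDerivAt_line (p e : E) (t : ℝ) : HasDerivAt (fun s : ℝ => p + s • e) e t := by
  simpa using ((hasDerivAt_id t).smul_const e).const_add p

theorem fderiv_apply_eq_deriv_line (hv : DifferentiableAt ℝ v p) (e : E) :
    fderiv ℝ v p e = deriv (fun t : ℝ => v (p + t • e)) 0 :=
  (hv.hasFDerivAt.comp_hasDerivAt_of_eq 0 (hasDerivAt_line p e 0) (by simp)).deriv.symm

theorem iteratedFDeriv_two_apply_eq_deriv_deriv_line (hv : ContDiffAt ℝ 2 v p) (e : E) :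
    iteratedFDeriv ℝ 2 v p ![e, e] = deriv (deriv fun t : ℝ => v (p + t • e)) 0 := by
  have hline : Tendsto (fun t : ℝ => p + t • e) (𝓝 0) (𝓝 p) := by
    simpa using (hasDerivAt_line p e 0).continuousAt.tendsto
  have hderiv : deriv (fun t : ℝ => v (p + t • e)) =ᶠ[𝓝 0]
      fun t => fderiv ℝ v (p + t • e) e := by
    filter_upwards [hline.eventually (hv.eventually (by simp))] with t ht
    exact ((ht.differentiableAt (by simp)).hasFDerivAt.comp_hasDerivAt t
      (hasDerivAt_line p e t)).deriv
  have hsecond : HasDerivAt (fun t : ℝ => fderiv ℝ v (p + t • e) e)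
      (fderiv ℝ (fderiv ℝ v) p e e) 0 := by
    have hD := ((hv.fderiv_right (m := 1) le_rfl).differentiableAt one_ne_zero).hasFDerivAt
    simpa [Function.comp_def] using
      ((ContinuousLinearMap.apply ℝ ℝ e).hasFDerivAt.comp_hasDerivAt 0
        (hD.comp_hasDerivAt_of_eq 0 (hasDerivAt_line p e 0) (by simp)))
  rw [iteratedFDeriv_two_apply, hderiv.deriv_eq, hsecond.deriv]
  simp

theorem IsLocalMin.iteratedFDeriv_two_nonneg (hv : ContDiffAt ℝ 2 v p) (hmin : IsLocalMin v p)
    (e : E) : 0 ≤ iteratedFDeriv ℝ 2 v p ![e, e] := by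
  have hline := (hasDerivAt_line p e 0).continuousAt
  rw [iteratedFDeriv_two_apply_eq_deriv_deriv_line hv e]
  exact IsLocalMin.deriv_deriv_nonneg
    (IsLocalMin.comp_continuous (g := fun t : ℝ => p + t • e) (by simpa using hmin) hline)
    (ContinuousAt.comp (g := v) (by simpa using hv.continuousAt) hline)

end LineRestriction

theorem deriv_deriv_quadratic (α β γ s : ℝ) :
    deriv (deriv fun t : ℝ => α + β * t + γ * t ^ 2) s = 2 * γ := by
  have h (t : ℝ) : HasDerivAt (fun t : ℝ => α + β * t + γ * t ^ 2) (β + γ * (2 * t)) t := by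
    simpa using (((hasDerivAt_id t).const_mul β).const_add α).fun_add
      ((hasDerivAt_pow 2 t).const_mul γ)
  rw [funext fun t => (h t).deriv]
  simp [mul_comm]

theorem hasDerivAt_mul_rpow_add_mul_rpow (α β b d : ℝ) {s : ℝ} (hs : s ≠ 0) :
    HasDerivAt (fun s : ℝ => α * s ^ b + β * s ^ d)
      (α * b * s ^ (b - 1) + β * d * s ^ (d - 1)) s := by
  simpa only [mul_assoc] using ((Real.hasDerivAt_rpow_const (Or.inl hs)).const_mul α).fun_add
    ((Real.hasDerivAt_rpow_const (p := d) (Or.inl hs)).const_mul β)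

theorem deriv_deriv_mul_rpow_add_mul_rpow (α β b d : ℝ) {s : ℝ} (hs : 0 < s) :
    deriv (deriv fun s : ℝ => α * s ^ b + β * s ^ d) s
      = α * b * (b - 1) * s ^ (b - 2) + β * d * (d - 1) * s ^ (d - 2) := by
  have h : deriv (fun s : ℝ => α * s ^ b + β * s ^ d)
      =ᶠ[𝓝 s] fun s => α * b * s ^ (b - 1) + β * d * s ^ (d - 1) := by
    filter_upwards [eventually_ne_nhds hs.ne'] with t ht
    exact (hasDerivAt_mul_rpow_add_mul_rpow α β b d ht).deriv
  rw [h.deriv_eq, (hasDerivAt_mul_rpow_add_mul_rpow _ _ _ _ hs.ne').deriv, sub_sub, sub_sub,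
    one_add_one_eq_two]

theorem deriv_deriv_comp_const_add (f : ℝ → ℝ) (y : ℝ) :
    deriv (deriv fun t => f (y + t)) 0 = deriv (deriv f) y := by
  have h : deriv (fun t => f (y + t)) = fun t => deriv f (y + t) :=
    funext (deriv_comp_const_add f y)
  rw [h, deriv_comp_const_add, add_zero]

theorem exists_pos_lt_and_mul_sq_lt (c : ℝ) {r : ℝ} (hr : 0 < r) :
    ∃ y₀, 0 < y₀ ∧ y₀ < r ∧ c * y₀ ^ 2 < r ^ 2 := by
  have hsmall : ∀ᶠ y in 𝓝 (0 : ℝ), y < r ∧ c * y ^ 2 < r ^ 2 :=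
    (eventually_lt_nhds hr).and <|
      (continuous_const.mul (continuous_pow 2)).continuousAt.eventually
        (eventually_lt_nhds (by simpa using pow_pos hr 2))
  have hpos : ∀ᶠ y in 𝓝[>] (0 : ℝ), 0 < y := self_mem_nhdsWithin
  exact (hpos.and (nhdsWithin_le_nhds hsmall)).exists

section DegenerateLaplacian

variable {n : ℕ} {a : ℝ} {u v w : EuclideanSpace ℝ (Fin n) × ℝ → ℝ}
  {p : EuclideanSpace ℝ (Fin n) × ℝ}

/-- The paper's operator is `L_a v = div(y^a ∇v) = y^a · degenerateLaplacian a v`. -/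
noncomputable def degenerateLaplacian (a : ℝ) (v : EuclideanSpace ℝ (Fin n) × ℝ → ℝ)
    (p : EuclideanSpace ℝ (Fin n) × ℝ) : ℝ :=
  halfSpaceLaplacian v p + a / p.2 * fderiv ℝ v p (0, 1)

theorem degenerateLaplacian_nonneg_of_isLocalMin (hv : ContDiffAt ℝ 2 v p)
    (hmin : IsLocalMin v p) : 0 ≤ degenerateLaplacian a v p := by
  rw [degenerateLaplacian, halfSpaceLaplacian, hmin.fderiv_eq_zero,
    zero_apply, mul_zero, add_zero]
  exact add_nonneg (Finset.sum_nonneg fun i _ => hmin.iteratedFDeriv_two_nonneg hv _)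
    (hmin.iteratedFDeriv_two_nonneg hv _)

theorem degenerateLaplacian_sub_smul (hu : ContDiffAt ℝ 2 u p) (hw : ContDiffAt ℝ 2 w p)
    (ε : ℝ) :
    degenerateLaplacian a (u - ε • w) p
      = degenerateLaplacian a u p - ε * degenerateLaplacian a w p := by
  have hud := hu.differentiableAt two_ne_zero
  have hwd := hw.differentiableAt two_ne_zero
  have hsecond : iteratedFDeriv ℝ 2 (u - ε • w) p
      = iteratedFDeriv ℝ 2 u p - ε • iteratedFDeriv ℝ 2 w p := by
    rw [iteratedFDeriv_sub_apply (i := 2) (g := ε • w) hu (hw.const_smul ε),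
      iteratedFDeriv_const_smul_apply (i := 2) hw]
  simp only [degenerateLaplacian, halfSpaceLaplacian, hsecond,
    fderiv_sub hud (hwd.const_smul ε), fderiv_const_smul hwd]
  simp only [sub_apply, smul_apply, smul_eq_mul, Finset.sum_sub_distrib, ← Finset.mul_sum]
  ring

theorem nonneg_of_degenerateLaplacian_neg {K S : Set (EuclideanSpace ℝ (Fin n) × ℝ)}
    (hK : IsCompact K) (hS : IsOpen S) (hSK : S ⊆ K) (hcont : ContinuousOn v K)
    (hv : ∀ p ∈ S, ContDiffAt ℝ 2 v p) (hneg : ∀ p ∈ S, degenerateLaplacian a v p < 0)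
    (hbdry : ∀ p ∈ K \ S, 0 ≤ v p) (hp : p ∈ K) : 0 ≤ v p := by
  obtain ⟨q, hqK, hmin⟩ := hK.exists_isMinOn ⟨p, hp⟩ hcont
  have hqS : q ∉ S := fun hqS => (hneg q hqS).not_ge <|
    degenerateLaplacian_nonneg_of_isLocalMin (hv q hqS)
      (hmin.isLocalMin (mem_of_superset (hS.mem_nhds hqS) hSK))
  exact (hbdry q ⟨hqK, hqS⟩).trans (hmin hp)

end DegenerateLaplacian

section Barrier

variable {n : ℕ} {a A c : ℝ} {p : EuclideanSpace ℝ (Fin n) × ℝ}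

noncomputable def hopfBarrier (a A c : ℝ) (p : EuclideanSpace ℝ (Fin n) × ℝ) : ℝ :=
  (A - ‖p.1‖ ^ 2) * p.2 ^ (1 - a) + c * p.2 ^ (3 - a)

theorem continuous_hopfBarrier (ha : a < 1) : Continuous (hopfBarrier (n := n) a A c) := by
  unfold hopfBarrier
  fun_prop (disch := linarith)

theorem contDiffAt_hopfBarrier (hp : 0 < p.2) : ContDiffAt ℝ 2 (hopfBarrier a A c) p := by
  have hrpow (b : ℝ) : ContDiffAt ℝ 2 (fun q : EuclideanSpace ℝ (Fin n) × ℝ => q.2 ^ b) p :=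
    (Real.contDiffAt_rpow_const_of_ne hp.ne').comp p contDiffAt_snd
  exact ((contDiffAt_const.sub ((contDiff_norm_sq ℝ).comp contDiff_fst).contDiffAt).mul
    (hrpow _)).add (contDiffAt_const.mul (hrpow _))

theorem iteratedFDeriv_hopfBarrier_horizontal (hp : 0 < p.2) (i : Fin n) :
    iteratedFDeriv ℝ 2 (hopfBarrier a A c) p
      ![(EuclideanSpace.single i 1, 0), (EuclideanSpace.single i 1, 0)] = -2 * p.2 ^ (1 - a) := by
  have hline : (fun t : ℝ => hopfBarrier a A c (p + t • (EuclideanSpace.single i 1, 0)))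
      = fun t => hopfBarrier a A c p + (-2 * p.1 i * p.2 ^ (1 - a)) * t
          + (-p.2 ^ (1 - a)) * t ^ 2 := by
    ext t
    have hnorm : ‖p.1 + t • EuclideanSpace.single i (1 : ℝ)‖ ^ 2
        = ‖p.1‖ ^ 2 + 2 * (t * p.1 i) + t ^ 2 := by
      rw [norm_add_sq_real, real_inner_smul_right, EuclideanSpace.inner_single_right,
        norm_smul, PiLp.norm_single]
      simp [sq_abs]
    simp only [hopfBarrier, Prod.fst_add, Prod.snd_add, Prod.smul_mk, smul_eq_mul, mul_zero,
      add_zero, hnorm]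
    ring
  rw [iteratedFDeriv_two_apply_eq_deriv_deriv_line (contDiffAt_hopfBarrier hp), hline,
    deriv_deriv_quadratic]
  ring

theorem hopfBarrier_vertical_line (p : EuclideanSpace ℝ (Fin n) × ℝ) :
    (fun t : ℝ => hopfBarrier a A c (p + t • (0, 1)))
      = fun t => (A - ‖p.1‖ ^ 2) * (p.2 + t) ^ (1 - a) + c * (p.2 + t) ^ (3 - a) := by
  ext t
  simp [hopfBarrier]

theorem fderiv_hopfBarrier_vertical (hp : 0 < p.2) :
    fderiv ℝ (hopfBarrier a A c) p (0, 1)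
      = (A - ‖p.1‖ ^ 2) * (1 - a) * p.2 ^ (1 - a - 1) + c * (3 - a) * p.2 ^ (3 - a - 1) := by
  rw [fderiv_apply_eq_deriv_line ((contDiffAt_hopfBarrier hp).differentiableAt two_ne_zero),
    hopfBarrier_vertical_line, deriv_comp_const_add (fun s => _ * s ^ _ + _ * s ^ _), add_zero,
    (hasDerivAt_mul_rpow_add_mul_rpow _ _ _ _ hp.ne').deriv]

theorem iteratedFDeriv_hopfBarrier_vertical (hp : 0 < p.2) :
    iteratedFDeriv ℝ 2 (hopfBarrier a A c) p ![(0, 1), (0, 1)]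
      = (A - ‖p.1‖ ^ 2) * (1 - a) * (1 - a - 1) * p.2 ^ (1 - a - 2)
        + c * (3 - a) * (3 - a - 1) * p.2 ^ (3 - a - 2) := by
  rw [iteratedFDeriv_two_apply_eq_deriv_deriv_line (contDiffAt_hopfBarrier hp),
    hopfBarrier_vertical_line, deriv_deriv_comp_const_add (fun s => _ * s ^ _ + _ * s ^ _),
    deriv_deriv_mul_rpow_add_mul_rpow _ _ _ _ hp]

theorem degenerateLaplacian_hopfBarrier (hp : 0 < p.2) :
    degenerateLaplacian a (hopfBarrier a A c) p = 2 * (c * (3 - a) - n) * p.2 ^ (1 - a) := by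
  have h₁ : p.2 ^ (1 - a - 1) = p.2 ^ (1 - a - 2) * p.2 := by
    rw [show 1 - a - 1 = 1 - a - 2 + 1 by ring, Real.rpow_add_one hp.ne']
  have h₂ : p.2 ^ (3 - a - 2) = p.2 ^ (1 - a) := by ring_nf
  have h₃ : p.2 ^ (3 - a - 1) = p.2 ^ (1 - a) * p.2 := by
    rw [show 3 - a - 1 = 1 - a + 1 by ring, Real.rpow_add_one hp.ne']
  have h₀ : p.2 ^ (1 - a) = p.2 ^ (1 - a - 2) * p.2 * p.2 := by
    rw [← h₁, ← Real.rpow_add_one hp.ne']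
    ring_nf
  simp only [degenerateLaplacian, halfSpaceLaplacian, iteratedFDeriv_hopfBarrier_horizontal hp,
    iteratedFDeriv_hopfBarrier_vertical hp, fderiv_hopfBarrier_vertical hp, Finset.sum_const,
    Finset.card_univ, Fintype.card_fin, nsmul_eq_mul]
  rw [h₁, h₂, h₃, h₀]
  field_simp
  ring

end Barrier

section Comparison

variable {n : ℕ} {a r y₀ c : ℝ} {x : EuclideanSpace ℝ (Fin n)} {y : ℝ}

theorem mul_rpow_le_hopfBarrier_zero (hc : 0 ≤ c) (hy : 0 ≤ y) (A : ℝ) :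
    A * y ^ (1 - a) ≤ hopfBarrier a A c ((0 : EuclideanSpace ℝ (Fin n)), y) := by
  have := Real.rpow_nonneg hy (3 - a)
  simp only [hopfBarrier, norm_zero]
  nlinarith

theorem hopfBarrier_eq_mul_rpow (ha : a < 1) (x : EuclideanSpace ℝ (Fin n)) (hy : 0 ≤ y) :
    hopfBarrier a (r ^ 2 - c * y₀ ^ 2) c (x, y)
      = (r ^ 2 - ‖x‖ ^ 2 - c * (y₀ ^ 2 - y ^ 2)) * y ^ (1 - a) := by
  rw [hopfBarrier, show 3 - a = 2 + (1 - a) by ring, Real.rpow_add' hy (by linarith),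
    Real.rpow_two]
  ring

theorem hopfBarrier_le (ha : a < 1) (hc : 0 ≤ c) (hy : y ∈ Icc 0 y₀) :
    hopfBarrier a (r ^ 2 - c * y₀ ^ 2) c (x, y) ≤ r ^ 2 * y₀ ^ (1 - a) := by
  have hgap : 0 ≤ c * (y₀ ^ 2 - y ^ 2) :=
    mul_nonneg hc (sub_nonneg.2 (pow_le_pow_left₀ hy.1 hy.2 2))
  rw [hopfBarrier_eq_mul_rpow ha x hy.1]
  calc (r ^ 2 - ‖x‖ ^ 2 - c * (y₀ ^ 2 - y ^ 2)) * y ^ (1 - a) ≤ r ^ 2 * y ^ (1 - a) :=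
        mul_le_mul_of_nonneg_right (by nlinarith [sq_nonneg ‖x‖]) (Real.rpow_nonneg hy.1 _)
    _ ≤ r ^ 2 * y₀ ^ (1 - a) :=
        mul_le_mul_of_nonneg_left (Real.rpow_le_rpow hy.1 hy.2 (by linarith)) (sq_nonneg r)

theorem hopfBarrier_nonpos (ha : a < 1) (hc : 0 ≤ c) (hx : ‖x‖ ≤ r) (hy : y ∈ Icc 0 y₀)
    (hbdry : r ≤ ‖x‖ ∨ y = 0) : hopfBarrier a (r ^ 2 - c * y₀ ^ 2) c (x, y) ≤ 0 := by
  rw [hopfBarrier_eq_mul_rpow ha x hy.1]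
  rcases hbdry with hxr | rfl
  · refine mul_nonpos_of_nonpos_of_nonneg ?_ (Real.rpow_nonneg hy.1 _)
    nlinarith [mul_nonneg hc (sub_nonneg.2 (pow_le_pow_left₀ hy.1 hy.2 2)), norm_nonneg x]
  · rw [Real.zero_rpow (by linarith), mul_zero]

theorem mul_hopfBarrier_le_of_supersolution {u : EuclideanSpace ℝ (Fin n) × ℝ → ℝ} {ε : ℝ}
    (ha : a < 1) (hc : (n : ℝ) < c * (3 - a)) (hε : 0 < ε)
    (hcont : ContinuousOn u (closedBall 0 r ×ˢ Icc 0 y₀))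
    (hC2 : ∀ p ∈ ball 0 r ×ˢ Ioo 0 y₀, ContDiffAt ℝ 2 u p)
    (hsuper : ∀ p ∈ ball 0 r ×ˢ Ioo 0 y₀, degenerateLaplacian a u p ≤ 0)
    (hnonneg : ∀ p ∈ closedBall 0 r ×ˢ Icc 0 y₀, 0 ≤ u p)
    (htop : ∀ x ∈ closedBall 0 r, ε * (r ^ 2 * y₀ ^ (1 - a)) ≤ u (x, y₀))
    {p : EuclideanSpace ℝ (Fin n) × ℝ} (hp : p ∈ closedBall 0 r ×ˢ Icc 0 y₀) :
    ε * hopfBarrier a (r ^ 2 - c * y₀ ^ 2) c p ≤ u p := by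
  have hc₀ : 0 ≤ c := by nlinarith [(n.cast_nonneg : (0 : ℝ) ≤ n)]
  set w := hopfBarrier (n := n) a (r ^ 2 - c * y₀ ^ 2) c
  suffices 0 ≤ (u - ε • w) p by simpa [sub_nonneg] using this
  refine nonneg_of_degenerateLaplacian_neg (a := a)
    ((isCompact_closedBall 0 r).prod isCompact_Icc) (isOpen_ball.prod isOpen_Ioo)
    (prod_mono ball_subset_closedBall Ioo_subset_Icc_self)
    (hcont.sub ((continuous_hopfBarrier ha).continuousOn.const_smul ε))
    (fun q hq => (hC2 q hq).sub ((contDiffAt_hopfBarrier hq.2.1).const_smul ε)) ?_ ?_ hp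
  · intro q hq
    rw [degenerateLaplacian_sub_smul (hC2 q hq) (contDiffAt_hopfBarrier hq.2.1),
      degenerateLaplacian_hopfBarrier hq.2.1]
    have hw : 0 < ε * (2 * (c * (3 - a) - n) * q.2 ^ (1 - a)) :=
      mul_pos hε (mul_pos (mul_pos two_pos (sub_pos.2 hc)) (Real.rpow_pos_of_pos hq.2.1 _))
    linarith [hsuper q hq]
  · rintro ⟨x, y⟩ ⟨⟨hx, hy⟩, hxy⟩
    rw [mem_closedBall_zero_iff] at hx
    simp only [Pi.sub_apply, Pi.smul_apply, smul_eq_mul, sub_nonneg]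
    rcases eq_or_lt_of_le hy.2 with rfl | hy₀
    · exact (mul_le_mul_of_nonneg_left (hopfBarrier_le ha hc₀ hy) hε.le).trans
        (htop x (mem_closedBall_zero_iff.2 hx))
    · have hbdry : r ≤ ‖x‖ ∨ y = 0 := by
        by_contra! h
        exact hxy ⟨mem_ball_zero_iff.2 h.1, lt_of_le_of_ne hy.1 h.2.symm, hy₀⟩
      exact (mul_nonpos_of_nonneg_of_nonpos hε.le (hopfBarrier_nonpos ha hc₀ hx hy hbdry)).trans
        (hnonneg _ ⟨mem_closedBall_zero_iff.2 hx, hy⟩)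

theorem exists_pos_mul_hopfBarrier_le {u : EuclideanSpace ℝ (Fin n) × ℝ → ℝ}
    (ha : a < 1) (hc : (n : ℝ) < c * (3 - a)) (hr : 0 < r) (hy₀ : 0 < y₀)
    (hcont : ContinuousOn u (closedBall 0 r ×ˢ Icc 0 y₀))
    (hC2 : ∀ p ∈ ball 0 r ×ˢ Ioo 0 y₀, ContDiffAt ℝ 2 u p)
    (hsuper : ∀ p ∈ ball 0 r ×ˢ Ioo 0 y₀, degenerateLaplacian a u p ≤ 0)
    (hnonneg : ∀ p ∈ closedBall 0 r ×ˢ Icc 0 y₀, 0 ≤ u p)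
    (htop : ∀ x ∈ closedBall 0 r, 0 < u (x, y₀)) :
    ∃ ε > 0, ∀ p ∈ closedBall 0 r ×ˢ Icc 0 y₀,
      ε * hopfBarrier a (r ^ 2 - c * y₀ ^ 2) c p ≤ u p := by
  have htop_cont : ContinuousOn (fun x => u (x, y₀)) (closedBall 0 r) :=
    hcont.comp (by fun_prop) fun x hx => ⟨hx, hy₀.le, le_rfl⟩
  obtain ⟨x₀, hx₀, hmin⟩ :=
    (isCompact_closedBall _ r).exists_isMinOn (nonempty_closedBall.2 hr.le) htop_cont
  have hscale : 0 < r ^ 2 * y₀ ^ (1 - a) := by positivity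
  have hε : 0 < u (x₀, y₀) / (r ^ 2 * y₀ ^ (1 - a)) := div_pos (htop x₀ hx₀) hscale
  refine ⟨_, hε, fun p hp => mul_hopfBarrier_le_of_supersolution ha hc hε hcont hC2 hsuper
    hnonneg (fun x hx => ?_) hp⟩
  rw [div_mul_cancel₀ _ hscale.ne']
  exact hmin hx

end Comparison

theorem hopf_lemma_degenerate_general {n : ℕ} (a : ℝ) (ha : a ∈ Set.Ioo (-1 : ℝ) 1) (R : ℝ)
    (hR : 0 < R)
    (u : EuclideanSpace ℝ (Fin n) × ℝ → ℝ)
    (hcont : ContinuousOn u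
      (closure ((Metric.ball (0 : EuclideanSpace ℝ (Fin n)) R) ×ˢ Set.Ioo (0 : ℝ) 1)))
    (hC2 : ContDiffOn ℝ 2 u
      ((Metric.ball (0 : EuclideanSpace ℝ (Fin n)) R) ×ˢ Set.Ioo (0 : ℝ) 1))
    (hsuper : ∀ p ∈ (Metric.ball (0 : EuclideanSpace ℝ (Fin n)) R) ×ˢ Set.Ioo (0 : ℝ) 1,
      halfSpaceLaplacian u p + a / p.2 * fderiv ℝ u p (0, 1) ≤ 0)
    (hpos : ∀ p ∈ (Metric.ball (0 : EuclideanSpace ℝ (Fin n)) R) ×ˢ Set.Ioo (0 : ℝ) 1,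
      0 < u p) :
    ∃ c > 0, ∃ y₀ ∈ Set.Ioo (0 : ℝ) 1, ∀ y ∈ Set.Ioo (0 : ℝ) y₀,
      c * y ^ (1 - a) ≤ u (0, y) := by
  obtain ⟨r, hr, hrR, hr1⟩ : ∃ r, 0 < r ∧ r < R ∧ r < 1 :=
    ⟨min R 1 / 2, by positivity, by linarith [min_le_left R 1, lt_min hR one_pos],
      by linarith [min_le_right R 1, lt_min hR one_pos]⟩
  obtain ⟨y₀, hy₀, hy₀r, hA⟩ := exists_pos_lt_and_mul_sq_lt (n + 1) hr
  have hy₀1 : y₀ < 1 := hy₀r.trans hr1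
  set C := ball (0 : EuclideanSpace ℝ (Fin n)) R ×ˢ Ioo (0 : ℝ) 1
  have hKC : closedBall 0 r ×ˢ Icc 0 y₀ ⊆ closure C := by
    rw [closure_prod_eq, closure_ball _ hR.ne', closure_Ioo zero_ne_one]
    exact prod_mono (closedBall_subset_closedBall hrR.le) (Icc_subset_Icc_right hy₀1.le)
  have hSC : ball 0 r ×ˢ Ioo 0 y₀ ⊆ C :=
    prod_mono (ball_subset_ball hrR.le) (Ioo_subset_Ioo_right hy₀1.le)
  have hnonneg (p) (hp : p ∈ closure C) : 0 ≤ u p :=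
    closure_minimal (image_subset_iff.2 fun q hq => (hpos q hq).le) isClosed_Ici
      (hcont.image_closure (mem_image_of_mem u hp))
  obtain ⟨ε, hε, hle⟩ := exists_pos_mul_hopfBarrier_le (c := n + 1) ha.2 (by nlinarith [ha.2])
    hr hy₀ (hcont.mono hKC)
    (fun p hp => hC2.contDiffAt ((isOpen_ball.prod isOpen_Ioo).mem_nhds (hSC hp)))
    (fun p hp => hsuper p (hSC hp)) (fun p hp => hnonneg p (hKC hp))
    (fun x hx => hpos _ ⟨mem_ball_zero_iff.2 ((mem_closedBall_zero_iff.1 hx).trans_lt hrR),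
      hy₀, hy₀1⟩)
  refine ⟨ε * (r ^ 2 - (n + 1) * y₀ ^ 2), mul_pos hε (sub_pos.2 hA), y₀, ⟨hy₀, hy₀1⟩,
    fun y hy => ?_⟩
  calc ε * (r ^ 2 - (n + 1) * y₀ ^ 2) * y ^ (1 - a)
      ≤ ε * hopfBarrier a (r ^ 2 - (n + 1) * y₀ ^ 2) (n + 1) (0, y) := by
        rw [mul_assoc]
        exact mul_le_mul_of_nonneg_left (mul_rpow_le_hopfBarrier_zero (by positivity) hy.1.le _)
          hε.le
    _ ≤ u (0, y) := hle _ ⟨mem_closedBall_self hr.le, hy.1.le, hy.2.le⟩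

/-- **Hopf lemma** for the degenerate elliptic operator `L_a u = div(y^a ∇u)`, i.e.
`y^a (Δu + (a/y)∂_y u)`, on the cylinder `𝒞 = B_R × (0,1)`: a positive supersolution which
is continuous up to the boundary and vanishes at `(0,0)` satisfies
`u(0,y) ≥ c · y^{1-a}` near `y = 0`, i.e. `limsup_{y→0⁺}(-y^{a-1}u(0,y)) < 0`. -/
theorem hopf_lemma_degenerate {n : ℕ} (a : ℝ) (ha : a ∈ Set.Ioo (-1 : ℝ) 1) (R : ℝ)
    (hR : 0 < R)
    (u : EuclideanSpace ℝ (Fin n) × ℝ → ℝ)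
    (hcont : ContinuousOn u
      (closure ((Metric.ball (0 : EuclideanSpace ℝ (Fin n)) R) ×ˢ Set.Ioo (0 : ℝ) 1)))
    (hC2 : ContDiffOn ℝ 2 u
      ((Metric.ball (0 : EuclideanSpace ℝ (Fin n)) R) ×ˢ Set.Ioo (0 : ℝ) 1))
    (hsuper : ∀ p ∈ (Metric.ball (0 : EuclideanSpace ℝ (Fin n)) R) ×ˢ Set.Ioo (0 : ℝ) 1,
      halfSpaceLaplacian u p + a / p.2 * fderiv ℝ u p (0, 1) ≤ 0)
    (hpos : ∀ p ∈ (Metric.ball (0 : EuclideanSpace ℝ (Fin n)) R) ×ˢ Set.Ioo (0 : ℝ) 1,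
      0 < u p)
    (hzero : u (0, 0) = 0) :
    ∃ c > 0, ∃ y₀ ∈ Set.Ioo (0 : ℝ) 1, ∀ y ∈ Set.Ioo (0 : ℝ) y₀,
      c * y ^ (1 - a) ≤ u (0, y) :=
  hopf_lemma_degenerate_general a ha R hR u hcont hC2 hsuper hpos
end

section
/- Let s ∈ (0,1) and λ > 0, and define v : (0,∞) → ℝ by v(y) = (λ^s / Γ(s)) ∫₀^∞ e^{−tλ} e^{−y²/(4t)} t^{s−1} dt. Then: (i) v satisfies the extension ODE v''(y) + ((1−2s)/y) v'(y) = λ v(y) for every y > 0; (ii) lim_{y→0⁺} v(y) = 1; (iii) −lim_{y→0⁺} y^{1−2s} v'(y) = 2^{1−2s} (Γ(1−s)/Γ(s)) λ^s. -/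
/-!
Write `v y = (λ ^ s / Γ(s)) * I_s (y² / 4)` with `I_p β = ∫₀^∞ t^(p-1) e^(-λt - β/t) dt`.
Differentiating under the integral gives `I_p' = -I_{p-1}`, and integrating the `t`-derivative of
the integrand over `(0, ∞)` gives `β I_{p-2} + (p - 1) I_{p-1} = λ I_p`, which is the extension
ODE in the variable `β = y² / 4`. The substitution `t = β / u` turns `I_{p-1} β` into
`β^(p-1) ∫₀^∞ u^(-p) e^(-u - λβ/u) du`, so `y^(1-2s) v' y` is `-2^(1-2s) (λ^s / Γ(s))` times an
integral of the same kind with exponent `1 - s`. Both boundary limits then follow by dominated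
convergence from `I_p 0 = λ^(-p) Γ(p)`.
-/

open MeasureTheory Real Set Filter Topology
open scoped Nat

lemma Real.exp_neg_le_factorial_div_pow {x : ℝ} (hx : 0 < x) (n : ℕ) :
    exp (-x) ≤ n ! / x ^ n := by
  rw [exp_neg, inv_le_comm₀ (exp_pos x) (by positivity), inv_div]
  exact pow_div_factorial_le_exp x hx.le n

theorem MeasureTheory.integral_comp_div_Ioi {E : Type*} [NormedAddCommGroup E] [NormedSpace ℝ E]
    (f : ℝ → E) {c : ℝ} (hc : 0 < c) :
    ∫ u in Ioi 0, (c / u ^ 2) • f (c / u) = ∫ t in Ioi 0, f t := by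
  have himage : (c / ·) '' Ioi 0 = Ioi (0 : ℝ) := by
    ext t
    refine ⟨fun ⟨u, hu, h⟩ => h ▸ div_pos hc hu, fun ht => ⟨c / t, div_pos hc ht, ?_⟩⟩
    exact div_div_cancel₀ hc.ne'
  have hinj : InjOn (c / · : ℝ → ℝ) (Ioi 0) := fun u _ v _ h => by
    simpa [div_eq_mul_inv, hc.ne'] using h
  have hderiv (u : ℝ) (hu : u ∈ Ioi 0) :
      HasDerivWithinAt (c / ·) (-(c / u ^ 2)) (Ioi 0) u := by
    have := ((hasDerivAt_inv (ne_of_gt hu)).const_mul c).hasDerivWithinAt (s := Ioi 0)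
    simpa [div_eq_mul_inv] using this
  have h := integral_image_eq_integral_abs_deriv_smul measurableSet_Ioi hderiv hinj f
  rw [himage] at h
  rw [h]
  refine setIntegral_congr_fun measurableSet_Ioi fun u hu => ?_
  rw [abs_neg, abs_of_pos (div_pos hc (pow_pos hu 2))]

namespace StingaTorrea

/-- `t^(p-1) e^(-αt - β/t)`; the integrand of the theorem is `kernel s λ (y² / 4)`. -/
noncomputable def kernel (p α β t : ℝ) : ℝ :=
  exp (-(t * α)) * exp (-(β / t)) * t ^ (p - 1)

noncomputable def kernelIntegral (p α β : ℝ) : ℝ :=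
  ∫ t in Ioi 0, kernel p α β t

variable {p α β t : ℝ}

lemma kernel_nonneg (ht : 0 < t) : 0 ≤ kernel p α β t := by
  unfold kernel; positivity

lemma measurable_kernel : Measurable (kernel p α β) := by
  unfold kernel; fun_prop

lemma kernel_zero_param : kernel p α 0 t = exp (-(t * α)) * t ^ (p - 1) := by
  simp [kernel]

lemma kernel_le_kernel_of_le {β' : ℝ} (h : β' ≤ β) (ht : 0 < t) :
    kernel p α β t ≤ kernel p α β' t := by
  unfold kernel
  gcongr

lemma kernel_le_kernel_zero_param (hβ : 0 < β) (ht : 0 < t) (n : ℕ) :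
    kernel p α β t ≤ n ! / β ^ n * kernel (p + n) α 0 t := by
  have hdecay : exp (-(β / t)) ≤ n ! / β ^ n * t ^ (n : ℝ) := by
    calc exp (-(β / t)) ≤ n ! / (β / t) ^ n := exp_neg_le_factorial_div_pow (by positivity) n
      _ = n ! / β ^ n * t ^ (n : ℝ) := by rw [rpow_natCast, div_pow]; field_simp
  rw [kernel_zero_param, kernel, show p + n - 1 = p - 1 + n by ring, rpow_add ht]
  calc exp (-(t * α)) * exp (-(β / t)) * t ^ (p - 1)
      ≤ exp (-(t * α)) * (n ! / β ^ n * t ^ (n : ℝ)) * t ^ (p - 1) := by gcongr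
    _ = _ := by ring

lemma integrableOn_kernel_zero_param (hp : 0 < p) (hα : 0 < α) :
    IntegrableOn (kernel p α 0) (Ioi 0) := by
  refine (integrableOn_rpow_mul_exp_neg_mul_rpow (s := p - 1) (by linarith) one_pos hα).congr_fun
    (fun t _ => ?_) measurableSet_Ioi
  simp [kernel_zero_param, mul_comm]

lemma integrableOn_kernel (hα : 0 < α) (hβ : 0 < β) (p : ℝ) :
    IntegrableOn (kernel p α β) (Ioi 0) := by
  obtain ⟨n, hn⟩ := exists_nat_gt (-p)
  have hdom := (integrableOn_kernel_zero_param (p := p + n) (by linarith) hα).const_mul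
    (n ! / β ^ n)
  refine hdom.mono' measurable_kernel.aestronglyMeasurable ?_
  filter_upwards [ae_restrict_mem measurableSet_Ioi] with t ht
  rw [norm_of_nonneg (kernel_nonneg ht)]
  exact kernel_le_kernel_zero_param hβ ht n

lemma kernelIntegral_zero (hp : 0 < p) (hα : 0 < α) :
    kernelIntegral p α 0 = (1 / α) ^ p * Gamma p := by
  rw [← integral_rpow_mul_exp_neg_mul_Ioi hp hα, kernelIntegral]
  refine setIntegral_congr_fun measurableSet_Ioi fun t _ => ?_
  simp [kernel_zero_param, mul_comm]

-- Since `0 ^ 0 = 1`, the value at `t = 0` is not the right-hand limit `0` when `p = 1`.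
lemma kernel_apply_zero (hp : p ≠ 1) : kernel p α β 0 = 0 := by
  simp [kernel, zero_rpow (sub_ne_zero.mpr hp)]

lemma hasDerivAt_kernel_param (ht : 0 < t) (p α β : ℝ) :
    HasDerivAt (fun β => kernel p α β t) (-kernel (p - 1) α β t) β := by
  refine (((((hasDerivAt_id β).div_const t).fun_neg.exp).const_mul
    (exp (-(t * α)))).mul_const (t ^ (p - 1))).congr_deriv ?_
  simp only [kernel, rpow_sub_one ht.ne', id]
  field_simp

lemma hasDerivAt_kernel (ht : 0 < t) (p α β : ℝ) :
    HasDerivAt (kernel p α β)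
      (β * kernel (p - 2) α β t + (p - 1) * kernel (p - 1) α β t - α * kernel p α β t)
      t := by
  have hexp : HasDerivAt (fun t => exp (-(t * α))) (exp (-(t * α)) * -α) t := by
    simpa using ((hasDerivAt_id t).mul_const α).fun_neg.exp
  have hexp' : HasDerivAt (fun t => exp (-(β / t))) (exp (-(β / t)) * (β / t ^ 2)) t := by
    have h := ((hasDerivAt_inv ht.ne').const_mul β).fun_neg.exp
    simp only [← div_eq_mul_inv] at h
    refine h.congr_deriv ?_
    field_simp
  refine ((hexp.fun_mul hexp').fun_mul
    (hasDerivAt_rpow_const (p := p - 1) (Or.inl ht.ne'))).congr_deriv ?_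
  simp only [kernel, show p - 2 - 1 = p - 1 - 1 - 1 by ring, rpow_sub_one ht.ne']
  field_simp
  ring

lemma tendsto_kernel_atTop (hα : 0 < α) (hβ : 0 ≤ β) :
    Tendsto (kernel p α β) atTop (𝓝 0) := by
  refine squeeze_zero' ?_ ?_ (tendsto_rpow_mul_exp_neg_mul_atTop_nhds_zero (p - 1) α hα)
  · filter_upwards [eventually_gt_atTop 0] with t ht using kernel_nonneg ht
  · filter_upwards [eventually_gt_atTop 0] with t ht
    calc kernel p α β t ≤ kernel p α 0 t := kernel_le_kernel_of_le hβ ht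
      _ = t ^ (p - 1) * exp (-α * t) := by rw [kernel_zero_param]; ring_nf

lemma continuousWithinAt_kernel_Ici_zero (hβ : 0 < β) (hp : p ≠ 1) :
    ContinuousWithinAt (kernel p α β) (Ici 0) 0 := by
  obtain ⟨n, hn⟩ := exists_nat_gt (1 - p)
  have hbound : Tendsto (fun t => n ! / β ^ n * kernel (p + n) α 0 t) (𝓝 0) (𝓝 0) := by
    have h : ContinuousAt (fun t => exp (-(t * α)) * t ^ (p + n - 1)) 0 :=
      (by fun_prop : Continuous fun t => exp (-(t * α))).continuousAt.mul
        (continuousAt_rpow_const _ _ (Or.inr (by linarith)))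
    simpa [kernel_zero_param, zero_rpow (by linarith : p + n - 1 ≠ 0)] using
      (h.tendsto.const_mul (n ! / β ^ n))
  rw [← continuousWithinAt_Ioi_iff_Ici, ContinuousWithinAt, kernel_apply_zero hp]
  refine squeeze_zero' ?_ ?_ (hbound.mono_left nhdsWithin_le_nhds)
  · filter_upwards [self_mem_nhdsWithin] with t ht using kernel_nonneg ht
  · filter_upwards [self_mem_nhdsWithin] with t ht using kernel_le_kernel_zero_param hβ ht n

lemma kernelIntegral_recurrence (hα : 0 < α) (hβ : 0 < β) (hp : p ≠ 1) :
    β * kernelIntegral (p - 2) α β + (p - 1) * kernelIntegral (p - 1) α β =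
      α * kernelIntegral p α β := by
  have hint (q c : ℝ) : Integrable (fun t => c * kernel q α β t) (volume.restrict (Ioi 0)) :=
    (integrableOn_kernel hα hβ q).const_mul c
  have hftc := integral_Ioi_of_hasDerivAt_of_tendsto (continuousWithinAt_kernel_Ici_zero hβ hp)
    (fun t ht => hasDerivAt_kernel ht p α β) (((hint _ _).add (hint _ _)).sub (hint _ _))
    (tendsto_kernel_atTop hα hβ.le)
  rw [integral_sub ?_ (hint _ _), integral_add (hint _ _) (hint _ _), integral_const_mul,
    integral_const_mul, integral_const_mul, kernel_apply_zero hp] at hftc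
  · simp only [kernelIntegral]
    linarith
  · exact (hint _ _).add (hint _ _)

lemma hasDerivAt_kernelIntegral (hα : 0 < α) (hβ : 0 < β) (p : ℝ) :
    HasDerivAt (kernelIntegral p α) (-kernelIntegral (p - 1) α β) β := by
  have hball : Metric.ball β (β / 2) ∈ 𝓝 β := Metric.ball_mem_nhds β (by positivity)
  have h := hasDerivAt_integral_of_dominated_loc_of_deriv_le (F := fun β t => kernel p α β t)
    (F' := fun β t => -kernel (p - 1) α β t) hball
    (Eventually.of_forall fun _ => measurable_kernel.aestronglyMeasurable)
    (integrableOn_kernel hα hβ p) measurable_kernel.neg.aestronglyMeasurable ?_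
    (integrableOn_kernel (p := p - 1) hα (half_pos hβ)) ?_
  · rw [integral_neg] at h
    exact h.2
  · filter_upwards [ae_restrict_mem measurableSet_Ioi] with t ht β' hβ'
    rw [norm_neg, norm_of_nonneg (kernel_nonneg ht)]
    refine kernel_le_kernel_of_le ?_ ht
    have := (abs_lt.mp (Metric.mem_ball.mp hβ')).1
    linarith
  · filter_upwards [ae_restrict_mem measurableSet_Ioi] with t ht β' _
    exact hasDerivAt_kernel_param ht p α β'

lemma tendsto_kernelIntegral_zero (hp : 0 < p) (hα : 0 < α) :
    Tendsto (kernelIntegral p α) (𝓝[≥] 0) (𝓝 ((1 / α) ^ p * Gamma p)) := by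
  rw [← kernelIntegral_zero hp hα]
  refine tendsto_integral_filter_of_dominated_convergence _
    (Eventually.of_forall fun _ => measurable_kernel.aestronglyMeasurable) ?_
    (integrableOn_kernel_zero_param hp hα) ?_
  · filter_upwards [self_mem_nhdsWithin] with β hβ
    filter_upwards [ae_restrict_mem measurableSet_Ioi] with t ht
    rw [norm_of_nonneg (kernel_nonneg ht)]
    exact kernel_le_kernel_of_le hβ ht
  · refine Eventually.of_forall fun t => Tendsto.mono_left ?_ nhdsWithin_le_nhds
    exact (by unfold kernel; fun_prop : Continuous fun β => kernel p α β t).tendsto 0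

lemma kernelIntegral_eq_rpow_mul (hβ : 0 < β) (q α : ℝ) :
    kernelIntegral q α β = β ^ q * kernelIntegral (-q) 1 (α * β) := by
  rw [kernelIntegral, ← integral_comp_div_Ioi _ hβ, kernelIntegral, ← integral_const_mul]
  refine setIntegral_congr_fun measurableSet_Ioi fun u (hu : 0 < u) => ?_
  simp only [kernel, smul_eq_mul, div_rpow hβ.le hu.le, rpow_sub_one hβ.ne', rpow_sub_one hu.ne',
    rpow_neg hu.le]
  rw [div_div_cancel₀ hβ.ne']
  field_simp

lemma hasDerivAt_kernelIntegral_sq_div_four (hα : 0 < α) {y : ℝ} (hy : y ≠ 0) (p : ℝ) :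
    HasDerivAt (fun y => kernelIntegral p α (y ^ 2 / 4))
      (-(y / 2) * kernelIntegral (p - 1) α (y ^ 2 / 4)) y := by
  refine ((hasDerivAt_kernelIntegral hα (by positivity) p).comp y
    ((hasDerivAt_pow 2 y).div_const 4)).congr_deriv ?_
  ring

lemma kernelIntegral_sq_div_four_ode (hα : 0 < α) (hp : p ≠ 1) {y : ℝ} (hy : y ≠ 0) :
    deriv (deriv fun y => kernelIntegral p α (y ^ 2 / 4)) y +
        (1 - 2 * p) / y * deriv (fun y => kernelIntegral p α (y ^ 2 / 4)) y =
      α * kernelIntegral p α (y ^ 2 / 4) := by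
  have hderiv : deriv (fun y => kernelIntegral p α (y ^ 2 / 4)) =ᶠ[𝓝 y]
      fun y => -(y / 2) * kernelIntegral (p - 1) α (y ^ 2 / 4) := by
    filter_upwards [isOpen_ne.mem_nhds hy] with x hx
    exact (hasDerivAt_kernelIntegral_sq_div_four hα hx p).deriv
  have hderiv2 := ((hasDerivAt_id' y).div_const 2).fun_neg.fun_mul
    (hasDerivAt_kernelIntegral_sq_div_four hα hy (p - 1))
  rw [hderiv.deriv_eq, hderiv2.deriv, hderiv.eq_of_nhds, ← kernelIntegral_recurrence hα
    (by positivity) hp, show p - 1 - 1 = p - 2 by ring]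
  field_simp
  ring

lemma tendsto_kernelIntegral_sq_div_four (hp : 0 < p) (hα : 0 < α) :
    Tendsto (fun y => kernelIntegral p α (y ^ 2 / 4)) (𝓝 0)
      (𝓝 ((1 / α) ^ p * Gamma p)) := by
  refine (tendsto_kernelIntegral_zero hp hα).comp (tendsto_nhdsWithin_iff.mpr ⟨?_, ?_⟩)
  · simpa using ((continuous_pow 2).div_const (4 : ℝ)).tendsto 0
  · exact Eventually.of_forall fun y => mem_Ici.mpr (by positivity)

lemma rpow_mul_sq_div_four_rpow_mul_half {y : ℝ} (hy : 0 < y) (p : ℝ) :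
    y ^ (1 - 2 * p) * (y ^ 2 / 4) ^ (p - 1) * (y / 2) = 2 ^ (1 - 2 * p) := by
  obtain ⟨z, hz, rfl⟩ : ∃ z, 0 < z ∧ y = 2 * z := ⟨y / 2, by positivity, by ring⟩
  have hsq : (2 * z) ^ 2 / 4 = z ^ (2 : ℝ) := by rw [rpow_two]; ring
  rw [hsq, ← rpow_mul hz.le, mul_rpow zero_le_two hz.le, mul_div_cancel_left₀ z two_ne_zero,
    mul_assoc, ← rpow_add_one hz.ne', mul_assoc, ← rpow_add hz,
    show 1 - 2 * p + (2 * (p - 1) + 1) = 0 by ring, rpow_zero, mul_one]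

lemma tendsto_rpow_mul_deriv_kernelIntegral_sq_div_four (hα : 0 < α) (hp : p < 1) :
    Tendsto (fun y => y ^ (1 - 2 * p) * deriv (fun y => kernelIntegral p α (y ^ 2 / 4)) y)
      (𝓝[>] 0) (𝓝 (-(2 ^ (1 - 2 * p) * Gamma (1 - p)))) := by
  have hlim : Tendsto (fun y => -(2 ^ (1 - 2 * p)) * kernelIntegral (1 - p) 1 (α * (y ^ 2 / 4)))
      (𝓝 0) (𝓝 (-(2 ^ (1 - 2 * p) * Gamma (1 - p)))) := by
    have hβ : Tendsto (fun y : ℝ => α * (y ^ 2 / 4)) (𝓝 0) (𝓝[≥] 0) := by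
      refine tendsto_nhdsWithin_iff.mpr ⟨?_, Eventually.of_forall fun y => mem_Ici.mpr ?_⟩
      · simpa using (by fun_prop : Continuous fun y : ℝ => α * (y ^ 2 / 4)).tendsto 0
      · positivity
    simpa using ((tendsto_kernelIntegral_zero (sub_pos.mpr hp) one_pos).comp hβ).const_mul
      (-(2 ^ (1 - 2 * p)))
  refine (hlim.mono_left nhdsWithin_le_nhds).congr' ?_
  filter_upwards [self_mem_nhdsWithin] with y (hy : 0 < y)
  rw [(hasDerivAt_kernelIntegral_sq_div_four hα hy.ne' p).deriv,
    kernelIntegral_eq_rpow_mul (q := p - 1) (β := y ^ 2 / 4) (by positivity), neg_sub,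
    ← rpow_mul_sq_div_four_rpow_mul_half hy p]
  ring

end StingaTorrea

open StingaTorrea

/-- Scalar (single-eigenvalue) form of the **Stinga–Torrea extension theorem**: the function
`v(y) = (λ^s/Γ(s)) ∫₀^∞ e^{-tλ} e^{-y²/(4t)} t^{s-1} dt` solves the extension ODE
`v'' + ((1-2s)/y)v' = λ v` on `(0,∞)`, has boundary value `1`, and its weighted normal
derivative recovers `2^{1-2s}(Γ(1-s)/Γ(s)) λ^s`. -/
theorem stinga_torrea_scalar_extension (s l : ℝ) (hs : s ∈ Set.Ioo (0 : ℝ) 1) (hl : 0 < l)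
    (v : ℝ → ℝ)
    (hv : ∀ y, v y = l ^ s / Real.Gamma s *
      ∫ t in Set.Ioi (0 : ℝ), Real.exp (-(t * l)) * Real.exp (-(y ^ 2 / (4 * t))) * t ^ (s - 1)) :
    (∀ y > (0 : ℝ), deriv (deriv v) y + (1 - 2 * s) / y * deriv v y = l * v y)
    ∧ Filter.Tendsto v (nhdsWithin 0 (Set.Ioi 0)) (nhds 1)
    ∧ Filter.Tendsto (fun y : ℝ => y ^ (1 - 2 * s) * deriv v y) (nhdsWithin 0 (Set.Ioi 0))
        (nhds (-((2 : ℝ) ^ (1 - 2 * s) * (Real.Gamma (1 - s) / Real.Gamma s) * l ^ s))) := by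
  have hΓ : Gamma s ≠ 0 := (Gamma_pos_of_pos hs.1).ne'
  obtain rfl : v = fun y => l ^ s / Gamma s * kernelIntegral s l (y ^ 2 / 4) := by
    funext y
    simp only [hv, kernelIntegral, kernel, div_div]
  simp only [deriv_const_mul_field']
  refine ⟨fun y hy => ?_, ?_, ?_⟩
  · linear_combination l ^ s / Gamma s * kernelIntegral_sq_div_four_ode hl hs.2.ne hy.ne'
  · convert ((tendsto_kernelIntegral_sq_div_four hs.1 hl).mono_left nhdsWithin_le_nhds).const_mul
      (l ^ s / Gamma s) using 2
    rw [one_div, inv_rpow hl.le]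
    field_simp
  · convert (tendsto_rpow_mul_deriv_kernelIntegral_sq_div_four hl hs.2).const_mul
      (l ^ s / Gamma s) using 2 <;> ring
end
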